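/- arXiv:1506.06412 — 10 statements merged into one kernel-verified Lean document; each statement's English description precedes it below -/
import Mathlib

section
/- Let $p_n(x) \in \mathbb{Z}[x]$ be a sequence of monic degree $d$ polynomials whose constant coefficients are $\pm 1$. Suppose there is a sequence of real numbers $\lambda_n \to \infty$ such that $p_n(\lambda_n) = 0$ for all $n$, and suppose $p_n(1) \ne 0$ for all $n$. If $\lim_{n\to\infty} p_n(x)/(x-\lambda_n) = x(x-1)^{d-2}$ (coefficientwise), then $p_n(x)$ is irreducible over $\mathbb{Q}$ for all but finitely many $n$. -/
/-!
Over `ℝ` write `p n = (X - λₙ) qₙ`. The `qₙ` converge to `Q = X (X - 1) ^ (d - 2)`, so their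
coefficients, and by Cauchy's bound their complex roots, are uniformly bounded; for large `n`,
`λₙ` exceeds that bound and is therefore a simple root of `p n`. In a factorisation `p n = f g`
into monic integer polynomials one factor, say `g`, does not vanish at `λₙ`, so `g ∣ qₙ`. Then the
roots of `g` are bounded, which confines `g` to a finite set of integer polynomials. A
nonconstant `g` dividing `p n` has `g(0) g(1) ≠ 0`, so it does not divide `Q`; since the
remainder modulo `g` depends continuously on the coefficients, it does not divide `qₙ` either
for large `n`. Hence `g = 1`.
-/

open Polynomial Filter
open scoped NNReal

namespace Polynomial

theorem finite_setOf_natDegree_le_coeff_mem {R : Type*} [Semiring R] (D : ℕ) {U : Set R}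
    (hU : U.Finite) : {f : R[X] | f.natDegree ≤ D ∧ ∀ i, f.coeff i ∈ U}.Finite := by
  refine Set.Finite.of_finite_image (f := fun f (i : Fin (D + 1)) => f.coeff i)
    ((Set.Finite.pi fun _ => hU).subset ?_) ?_
  · rintro _ ⟨f, hf, rfl⟩ i -
    exact hf.2 i
  · exact fun f hf g hg hfg =>
      (ext_iff_natDegree_le hf.1 hg.1).2 fun i hi => congr_fun hfg ⟨i, Nat.lt_succ_of_le hi⟩

theorem finite_setOf_monic_norm_root_le (D : ℕ) (B : ℝ) :
    {g : ℤ[X] | g.Monic ∧ g.natDegree ≤ D ∧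
      ∀ z, (g.map (Int.castRingHom ℂ)).IsRoot z → ‖z‖ ≤ B}.Finite := by
  set C : ℤ := ⌈max B 1 ^ D * D.choose (D / 2)⌉
  refine (finite_setOf_natDegree_le_coeff_mem D (Set.finite_Icc (-C) C)).subset ?_
  rintro g ⟨hmonic, hdeg, hroots⟩
  refine ⟨hdeg, fun i => abs_le.mp ?_⟩
  have hcoeff := coeff_bdd_of_roots_le _ hmonic (IsAlgClosed.splits _) hdeg
    (fun z hz => hroots z (isRoot_of_mem_roots hz)) i
  rw [coeff_map, eq_intCast, Complex.norm_intCast] at hcoeff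
  exact_mod_cast hcoeff.trans (Int.le_ceil _)

theorem cauchyBound_le_of_monic {K : Type*} [NormedDivisionRing K] {p : K[X]} (hp : p.Monic)
    {M : ℝ≥0} (h : ∀ i, ‖p.coeff i‖₊ ≤ M) : cauchyBound p ≤ M + 1 := by
  rw [cauchyBound, hp.leadingCoeff, nnnorm_one, div_one]
  exact add_le_add_left (Finset.sup_le fun i _ => h i) 1

theorem exists_forall_nnnorm_coeff_le {K ι : Type*} [SeminormedRing K] {q : ι → K[X]} {D : ℕ}
    (hdeg : ∀ n, (q n).natDegree ≤ D)
    (hbdd : ∀ j, BddAbove (Set.range fun n => ‖(q n).coeff j‖₊)) :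
    ∃ M, ∀ n j, ‖(q n).coeff j‖₊ ≤ M := by
  choose M hM using hbdd
  refine ⟨∑ j ∈ Finset.range (D + 1), M j, fun n j => ?_⟩
  rcases le_or_gt j D with hj | hj
  · exact (hM j ⟨n, rfl⟩).trans
      (Finset.single_le_sum (fun _ _ => zero_le) (Finset.mem_range.2 (Nat.lt_succ_of_le hj)))
  · simp [coeff_eq_zero_of_natDegree_lt ((hdeg n).trans_lt hj)]

theorem exists_forall_norm_root_le {K ι : Type*} [NormedDivisionRing K] {q : ι → K[X]} {D : ℕ}
    (hmonic : ∀ n, (q n).Monic) (hdeg : ∀ n, (q n).natDegree ≤ D)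
    (hbdd : ∀ j, BddAbove (Set.range fun n => ‖(q n).coeff j‖₊)) :
    ∃ B : ℝ, ∀ n z, (q n).IsRoot z → ‖z‖ ≤ B := by
  obtain ⟨M, hM⟩ := exists_forall_nnnorm_coeff_le hdeg hbdd
  refine ⟨M + 1, fun n z hz => ?_⟩
  have := (hz.norm_lt_cauchyBound (hmonic n).ne_zero).le.trans
    (cauchyBound_le_of_monic (hmonic n) (hM n))
  exact_mod_cast this

theorem coeff_modByMonic_eq_sum {R : Type*} [CommRing R] {p : R[X]} (g : R[X]) {D : ℕ}
    (hp : p.natDegree ≤ D) (k : ℕ) :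
    (p %ₘ g).coeff k = ∑ j ∈ Finset.range (D + 1), p.coeff j * (X ^ j %ₘ g).coeff k := by
  conv_lhs => rw [p.as_sum_range_C_mul_X_pow' (Nat.lt_succ_of_le hp)]
  simp only [← smul_eq_C_mul, ← modByMonicHom_apply, map_sum, map_smul, finsetSum_coeff,
    coeff_smul, smul_eq_mul]

section Limits

variable {R ι : Type*} [CommRing R] [TopologicalSpace R] {l : Filter ι}
  {q : ι → R[X]} {Q : R[X]} {D : ℕ}

theorem natDegree_le_of_tendsto_coeff [T2Space R] [l.NeBot] (hdeg : ∀ i, (q i).natDegree ≤ D)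
    (hq : ∀ j, Tendsto (fun i => (q i).coeff j) l (nhds (Q.coeff j))) : Q.natDegree ≤ D :=
  natDegree_le_iff_coeff_eq_zero.2 fun j hj => tendsto_nhds_unique (hq j) <|
    tendsto_const_nhds.congr fun i => (coeff_eq_zero_of_natDegree_lt ((hdeg i).trans_lt hj)).symm

theorem tendsto_coeff_modByMonic [IsTopologicalRing R] (g : R[X])
    (hdeg : ∀ i, (q i).natDegree ≤ D) (hQ : Q.natDegree ≤ D)
    (hq : ∀ j, Tendsto (fun i => (q i).coeff j) l (nhds (Q.coeff j)))
    (k : ℕ) : Tendsto (fun i => (q i %ₘ g).coeff k) l (nhds ((Q %ₘ g).coeff k)) := by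
  simp only [coeff_modByMonic_eq_sum g (hdeg _), coeff_modByMonic_eq_sum g hQ]
  exact tendsto_finsetSum _ fun j _ => (hq j).mul_const _

theorem eventually_not_dvd_of_tendsto_coeff [IsTopologicalRing R] [T2Space R] [l.NeBot]
    (hdeg : ∀ i, (q i).natDegree ≤ D)
    (hq : ∀ j, Tendsto (fun i => (q i).coeff j) l (nhds (Q.coeff j)))
    {g : R[X]} (hg : g.Monic) (hgQ : ¬ g ∣ Q) : ∀ᶠ i in l, ¬ g ∣ q i := by
  obtain ⟨k, hk⟩ : ∃ k, (Q %ₘ g).coeff k ≠ 0 := by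
    by_contra! h
    exact hgQ ((modByMonic_eq_zero_iff_dvd hg).1 (ext h))
  filter_upwards [(tendsto_coeff_modByMonic g hdeg (natDegree_le_of_tendsto_coeff hdeg hq) hq
    k).eventually_ne hk] with i hi hgq
  rw [(modByMonic_eq_zero_iff_dvd hg).2 hgq, coeff_zero] at hi
  exact hi rfl

end Limits

theorem eval_eq_zero_of_irreducible_dvd {K : Type*} [Field K] {h g : K[X]}
    (hirr : Irreducible h) (hg : h ∣ g) {a : K} (ha : h ∣ X - C a) : g.eval a = 0 :=
  dvd_iff_isRoot.1 ((hirr.associated_of_dvd (irreducible_X_sub_C a) ha).symm.dvd.trans hg)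

theorem not_dvd_X_mul_X_sub_one_pow {K : Type*} [Field K] {g P : K[X]} (hg : 0 < g.natDegree)
    (hgP : g ∣ P) (h0 : P.eval 0 ≠ 0) (h1 : P.eval 1 ≠ 0) (k : ℕ) : ¬ g ∣ X * (X - 1) ^ k := by
  intro hdvd
  obtain ⟨h, hirr, hhg⟩ := WfDvdMonoid.exists_irreducible_factor
    (not_isUnit_of_natDegree_pos g hg) (ne_zero_of_natDegree_gt hg)
  have hhP := hhg.trans hgP
  rcases hirr.prime.dvd_or_dvd (hhg.trans hdvd) with hX | hX1
  · exact h0 (eval_eq_zero_of_irreducible_dvd hirr hhP (by simpa using hX))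
  · exact h1 (eval_eq_zero_of_irreducible_dvd hirr hhP
      (by simpa using hirr.prime.dvd_of_dvd_pow hX1))

theorem dvd_of_dvd_X_sub_C_mul {K : Type*} [Field K] {f q : K[X]} {a : K}
    (h : f ∣ (X - C a) * q) (hf : f.eval a ≠ 0) : f ∣ q := by
  refine IsCoprime.dvd_of_dvd_mul_left ?_ h
  exact ((irreducible_X_sub_C a).coprime_iff_not_dvd.2 (mt dvd_iff_isRoot.1 hf)).symm

theorem irreducible_of_forall_monic_dvd {R K : Type*} [CommRing R] [IsDomain R] [Field K]
    (φ : R →+* K) {p : R[X]} (hp : p.Monic) {a : K} {q : K[X]} (hpq : p.map φ = (X - C a) * q)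
    (hqa : q.eval a ≠ 0) (h : ∀ g : R[X], g.Monic → g ∣ p → g.map φ ∣ q → g = 1) :
    Irreducible p := by
  have hpa : (p.map φ).eval a = 0 := by simp [hpq]
  have hp1 : p ≠ 1 := by rintro rfl; simp at hpa
  refine (irreducible_of_monic hp hp1).2 fun f g hf hg hfg => ?_
  have hfactor : ∀ u v : R[X], v.Monic → u * v = p → (v.map φ).eval a ≠ 0 → v = 1 :=
    fun u v hv huv hva => h v hv (Dvd.intro_left u huv)
      (dvd_of_dvd_X_sub_C_mul (hpq ▸ map_dvd φ (Dvd.intro_left u huv)) hva)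
  by_cases hfa : (f.map φ).eval a = 0
  · refine Or.inr (hfactor f g hg hfg fun hga => hqa ?_)
    obtain ⟨f₁, hf₁⟩ := dvd_iff_isRoot.2 hfa
    obtain ⟨g₁, hg₁⟩ := dvd_iff_isRoot.2 hga
    have : (X - C a) * q = (X - C a) * ((X - C a) * (f₁ * g₁)) := by
      rw [← hpq, ← hfg, Polynomial.map_mul, hf₁, hg₁]; ring
    simp [mul_left_cancel₀ (X_sub_C_ne_zero a) this]
  · exact Or.inl (hfactor g f hf (by rw [mul_comm, hfg]) hfa)

theorem eventually_forall_monic_dvd_of_tendsto_coeff {ι : Type*} {l : Filter ι} [l.NeBot]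
    {q : ι → ℝ[X]} {Q : ℝ[X]} {D : ℕ} (hmonic : ∀ i, (q i).Monic)
    (hdeg : ∀ i, (q i).natDegree ≤ D)
    (hq : ∀ j, Tendsto (fun i => (q i).coeff j) l (nhds (Q.coeff j)))
    {B : ℝ} (hB : ∀ i z, ((q i).map (algebraMap ℝ ℂ)).IsRoot z → ‖z‖ ≤ B) :
    ∀ᶠ i in l, ∀ g : ℤ[X], g.Monic →
      g.map (Int.castRingHom ℝ) ∣ q i → g.map (Int.castRingHom ℝ) ∣ Q := by
  set S := {g : ℤ[X] | g.Monic ∧ g.natDegree ≤ D ∧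
    (∀ z, (g.map (Int.castRingHom ℂ)).IsRoot z → ‖z‖ ≤ B) ∧ ¬ g.map (Int.castRingHom ℝ) ∣ Q}
  have hS : S.Finite :=
    (finite_setOf_monic_norm_root_le D B).subset fun g hg => ⟨hg.1, hg.2.1, hg.2.2.1⟩
  filter_upwards [(eventually_all_finite hS).2 fun g hg =>
    eventually_not_dvd_of_tendsto_coeff hdeg hq (hg.1.map _) hg.2.2.2] with i hS g hg hgq
  by_contra hgQ
  refine hS g ⟨hg, ?_, fun z hz => hB i z ?_, hgQ⟩ hgq
  · rw [← hg.natDegree_map (Int.castRingHom ℝ)]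
    exact (natDegree_le_of_dvd hgq (hmonic i).ne_zero).trans (hdeg i)
  · have hgqC := map_dvd (algebraMap ℝ ℂ) hgq
    rw [Polynomial.map_map, RingHom.ext_int ((algebraMap ℝ ℂ).comp _) (Int.castRingHom ℂ)]
      at hgqC
    exact eval_eq_zero_of_dvd_of_eval_eq_zero hgqC hz

end Polynomial

theorem stmt0 (d : ℕ) (p : ℕ → Polynomial ℤ)
    (hmonic : ∀ n, (p n).Monic) (hdeg : ∀ n, (p n).natDegree = d)
    (hconst : ∀ n, (p n).coeff 0 = 1 ∨ (p n).coeff 0 = -1)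
    (lam : ℕ → ℝ) (hlam : Tendsto lam atTop atTop)
    (hroot : ∀ n, ((p n).map (Int.castRingHom ℝ)).eval (lam n) = 0)
    (hone : ∀ n, (p n).eval 1 ≠ 0)
    (hconv : ∀ j : ℕ, Tendsto
      (fun n => (((p n).map (Int.castRingHom ℝ)) /ₘ (X - C (lam n))).coeff j)
      atTop (nhds ((X * (X - 1) ^ (d - 2) : Polynomial ℝ).coeff j))) :
    ∀ᶠ n in atTop, Irreducible ((p n).map (Int.castRingHom ℚ)) := by
  set q : ℕ → ℝ[X] := fun n => (p n).map (Int.castRingHom ℝ) /ₘ (X - C (lam n))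
  have hpq n : (p n).map (Int.castRingHom ℝ) = (X - C (lam n)) * q n :=
    (mul_divByMonic_eq_iff_isRoot.2 (hroot n)).symm
  have hqmonic n : (q n).Monic :=
    .of_mul_monic_left (monic_X_sub_C _) (hpq n ▸ (hmonic n).map _)
  have hqdeg n : (q n).natDegree ≤ d := by
    rw [natDegree_divByMonic _ (monic_X_sub_C _), (hmonic n).natDegree_map, hdeg n]
    exact Nat.sub_le _ _
  obtain ⟨B, hB⟩ : ∃ B : ℝ, ∀ n z, ((q n).map (algebraMap ℝ ℂ)).IsRoot z → ‖z‖ ≤ B :=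
    exists_forall_norm_root_le (fun n => (hqmonic n).map _)
      (fun n => natDegree_map_le.trans (hqdeg n))
      fun j => by simpa using (hconv j).nnnorm.bddAbove_range
  filter_upwards [hlam.eventually_gt_atTop B,
    eventually_forall_monic_dvd_of_tendsto_coeff hqmonic hqdeg hconv hB] with n hBn hdvd
  rw [← algebraMap_int_eq, ← (hmonic n).irreducible_iff_irreducible_map_fraction_map]
  refine irreducible_of_forall_monic_dvd _ (hmonic n) (hpq n) (fun hq0 => ?_)
    fun g hg hgp hgq => by_contra fun hg1 => not_dvd_X_mul_X_sub_one_pow ?_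
      (Polynomial.map_dvd _ hgp) ?_ ?_ _ (hdvd g hg hgq)
  · have hlamB := hB n (algebraMap ℝ ℂ (lam n))
      (by rw [IsRoot, eval_map, eval₂_at_apply, hq0, map_zero])
    rw [Complex.coe_algebraMap, Complex.norm_real, Real.norm_eq_abs] at hlamB
    exact (hBn.trans_le (le_abs_self _)).not_ge hlamB
  · rw [hg.natDegree_map]
    exact hg.natDegree_pos.2 hg1
  · rw [eval_zero_map, ← coeff_zero_eq_eval_zero]
    rcases hconst n with h | h <;> simp [h]
  · simpa using hone n
end

section
/- Let $\Omega$ be an $n\times n$ symmetric matrix with nonnegative real entries and zero diagonal, and let $Q_i = I + D_i\Omega$. If $M$ is any product of the matrices $Q_1,\dots,Q_n$ in which every $Q_i$ appears at least once, then $M \ge I + \Omega$ entrywise. -/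
/-!
Call a square matrix *dominant* if its entries are nonnegative and its diagonal entries are at
least `1`. Dominant matrices are closed under products, and multiplying a dominant matrix on
either side by another dominant matrix can only increase its entries. Each `Qᵢ` is dominant
(its diagonal is `1` because `Ω` has zero diagonal) and its `i`-th row agrees with that of
`I + Ω`. Writing `M = P * Qₐ * P'` around an occurrence of `Qₐ` gives
`(I + Ω) a b = Qₐ a b ≤ (P * Qₐ * P') a b`.
-/

namespace Matrix

variable {ι R : Type*}

section Semiring

variable [Fintype ι] [DecidableEq ι] [Semiring R]

theorem one_add_single_mul_apply (Ω : Matrix ι ι R) (i a b : ι) :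
    (1 + single i i 1 * Ω : Matrix ι ι R) a b =
      (1 : Matrix ι ι R) a b + if a = i then Ω i b else 0 := by
  rw [add_apply]
  split_ifs with h
  · subst h
    rw [single_mul_apply_same, one_mul]
  · rw [single_mul_apply_of_ne _ _ _ _ _ h]

theorem one_add_single_mul_apply_same (Ω : Matrix ι ι R) (a b : ι) :
    (1 + single a a 1 * Ω : Matrix ι ι R) a b = (1 + Ω) a b := by
  rw [one_add_single_mul_apply, if_pos rfl, add_apply]

end Semiring

section OrderedSemiring

variable [Semiring R] [PartialOrder R] [IsOrderedRing R]

structure IsDominant (A : Matrix ι ι R) : Prop where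
  nonneg : ∀ i j, 0 ≤ A i j
  one_le_diag : ∀ i, 1 ≤ A i i

theorem diag_mul_apply_le_mul_apply [Fintype ι] {A B : Matrix ι ι R} (hA : ∀ i j, 0 ≤ A i j)
    (hB : ∀ i j, 0 ≤ B i j) (a b : ι) : A a a * B a b ≤ (A * B) a b :=
  Finset.single_le_sum (f := fun k => A a k * B k b)
    (fun k _ => mul_nonneg (hA a k) (hB k b)) (Finset.mem_univ a)

theorem apply_mul_diag_le_mul_apply [Fintype ι] {A B : Matrix ι ι R} (hA : ∀ i j, 0 ≤ A i j)
    (hB : ∀ i j, 0 ≤ B i j) (a b : ι) : A a b * B b b ≤ (A * B) a b :=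
  Finset.single_le_sum (f := fun k => A a k * B k b)
    (fun k _ => mul_nonneg (hA a k) (hB k b)) (Finset.mem_univ b)

namespace IsDominant

variable {A B : Matrix ι ι R}

theorem one [DecidableEq ι] : IsDominant (1 : Matrix ι ι R) where
  nonneg i j := by
    rw [one_apply]
    split_ifs
    exacts [zero_le_one, le_rfl]
  one_le_diag i := by rw [one_apply_eq]

theorem apply_le_mul_apply_left [Fintype ι] (hA : IsDominant A) (hB : IsDominant B) (a b : ι) :
    B a b ≤ (A * B) a b :=
  (le_mul_of_one_le_left (hB.nonneg a b) (hA.one_le_diag a)).trans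
    (diag_mul_apply_le_mul_apply hA.nonneg hB.nonneg a b)

theorem apply_le_mul_apply_right [Fintype ι] (hA : IsDominant A) (hB : IsDominant B) (a b : ι) :
    A a b ≤ (A * B) a b :=
  (le_mul_of_one_le_right (hA.nonneg a b) (hB.one_le_diag b)).trans
    (apply_mul_diag_le_mul_apply hA.nonneg hB.nonneg a b)

theorem mul [Fintype ι] (hA : IsDominant A) (hB : IsDominant B) : IsDominant (A * B) where
  nonneg i j := Finset.sum_nonneg fun k _ => mul_nonneg (hA.nonneg i k) (hB.nonneg k j)
  one_le_diag i := (hB.one_le_diag i).trans (hA.apply_le_mul_apply_left hB i i)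

theorem list_prod [Fintype ι] [DecidableEq ι] {L : List (Matrix ι ι R)}
    (hL : ∀ A ∈ L, IsDominant A) :
    IsDominant L.prod := by
  induction L with
  | nil => exact one
  | cons A L ih =>
    rw [List.prod_cons]
    exact (hL A List.mem_cons_self).mul (ih fun B hB => hL B (List.mem_cons_of_mem A hB))

end IsDominant

theorem isDominant_one_add_single_mul [Fintype ι] [DecidableEq ι] {Ω : Matrix ι ι R}
    (hnn : ∀ a b, 0 ≤ Ω a b) (hdiag : ∀ i, Ω i i = 0) (i : ι) :
    IsDominant (1 + single i i 1 * Ω) where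
  nonneg a b := by
    rw [one_add_single_mul_apply]
    exact add_nonneg (IsDominant.one.nonneg a b) (by split_ifs <;> simp [hnn])
  one_le_diag a := by
    rw [one_add_single_mul_apply, one_apply_eq]
    split_ifs with h
    · rw [h, hdiag, add_zero]
    · rw [add_zero]

end OrderedSemiring

end Matrix

theorem stmt5_general {n : ℕ} (Ω : Matrix (Fin n) (Fin n) ℝ)
    (hnn : ∀ a b, 0 ≤ Ω a b) (hdiag : ∀ i, Ω i i = 0)
    (l : List (Fin n)) (hall : ∀ i : Fin n, i ∈ l) :
    ∀ a b, (1 + Ω) a b ≤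
      (((l.map (fun i => 1 + Matrix.single i i 1 * Ω)).prod : Matrix (Fin n) (Fin n) ℝ)) a b := by
  intro a b
  obtain ⟨l₁, l₂, rfl⟩ := List.append_of_mem (hall a)
  set Q : Fin n → Matrix (Fin n) (Fin n) ℝ := fun i => 1 + Matrix.single i i 1 * Ω
  have hQ : ∀ i, (Q i).IsDominant := Matrix.isDominant_one_add_single_mul hnn hdiag
  have hprod : ∀ l' : List (Fin n), (l'.map Q).prod.IsDominant := fun l' =>
    Matrix.IsDominant.list_prod (by simpa using fun i _ => hQ i)
  rw [List.map_append, List.prod_append, List.map_cons, List.prod_cons,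
    ← Matrix.one_add_single_mul_apply_same]
  calc Q a a b ≤ (Q a * (l₂.map Q).prod) a b := (hQ a).apply_le_mul_apply_right (hprod l₂) a b
    _ ≤ _ := (hprod l₁).apply_le_mul_apply_left ((hQ a).mul (hprod l₂)) a b

theorem stmt5 {n : ℕ} (Ω : Matrix (Fin n) (Fin n) ℝ) (hsymm : Ω.IsSymm)
    (hnn : ∀ a b, 0 ≤ Ω a b) (hdiag : ∀ i, Ω i i = 0)
    (l : List (Fin n)) (hall : ∀ i : Fin n, i ∈ l) :
    ∀ a b, (1 + Ω) a b ≤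
      (((l.map (fun i => 1 + Matrix.single i i 1 * Ω)).prod : Matrix (Fin n) (Fin n) ℝ)) a b :=
  stmt5_general Ω hnn hdiag l hall
end

section
/- Let $M$ be a product of matrices $Q_i = I + D_i\Omega$ (each index appearing at least once), where $\Omega$ is an $n\times n$ symmetric matrix with nonnegative real entries and zero diagonal. Then $M$ has a power with strictly positive entries if and only if $I + \Omega$ does. -/
namespace Stmt7Aux

variable {n : ℕ}

local notation "Mat" => Matrix (Fin n) (Fin n) ℝ

lemma one_nn : ∀ a b, (0:ℝ) ≤ (1 : Mat) a b := by
  intro a b; rw [Matrix.one_apply]; split <;> norm_num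

lemma mul_mono' (A A' B B' : Mat) (hA : ∀ a b, 0 ≤ A a b) (hB : ∀ a b, 0 ≤ B a b)
    (h1 : ∀ a b, A a b ≤ A' a b) (h2 : ∀ a b, B a b ≤ B' a b) :
    ∀ a b, (A * B) a b ≤ (A' * B') a b := by
  intro a b
  rw [Matrix.mul_apply, Matrix.mul_apply]
  exact Finset.sum_le_sum fun k _ =>
    mul_le_mul (h1 a k) (h2 k b) (hB k b) (le_trans (hA a k) (h1 a k))

lemma prod_ge_one (L : List Mat)
    (h : ∀ A ∈ L, ∀ a b, (1 : Mat) a b ≤ A a b) :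
    ∀ a b, (1 : Mat) a b ≤ L.prod a b := by
  induction L with
  | nil => intro a b; simp
  | cons A t ih =>
    have hA := h A (by simp)
    have ht := ih (fun B hB => h B (by simp [hB]))
    intro a b
    rw [List.prod_cons]
    calc (1 : Mat) a b = ((1 * 1 : Mat)) a b := by rw [mul_one]
      _ ≤ ((A * t.prod : Mat)) a b := mul_mono' 1 A 1 t.prod one_nn one_nn hA ht a b
      _ = (A :: t).prod a b := by rw [List.prod_cons]

lemma prod_ge_mem (L : List Mat)
    (h : ∀ A ∈ L, ∀ a b, (1 : Mat) a b ≤ A a b)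
    (X : Mat) (hX : X ∈ L) :
    ∀ a b, X a b ≤ L.prod a b := by
  induction L with
  | nil => exact absurd hX (by simp)
  | cons A t ih =>
    have hA := h A (by simp)
    have ht : ∀ B ∈ t, ∀ a b, (1 : Mat) a b ≤ B a b := fun B hB => h B (by simp [hB])
    have hAnn : ∀ a b, 0 ≤ A a b := fun a b => le_trans (one_nn a b) (hA a b)
    intro a b
    rw [List.prod_cons]
    rcases List.mem_cons.mp hX with rfl | hXt
    · calc X a b = ((X * 1 : Mat)) a b := by rw [mul_one]
        _ ≤ (X * t.prod) a b :=
          mul_mono' X X 1 t.prod hAnn one_nn (fun _ _ => le_rfl) (prod_ge_one t ht) a b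
    · have hXnn : ∀ a b, 0 ≤ X a b := fun a b =>
        le_trans (one_nn a b) (h X (by simp [hXt]) a b)
      calc X a b ≤ t.prod a b := ih ht hXt a b
        _ = ((1 * t.prod : Mat)) a b := by rw [one_mul]
        _ ≤ ((A * t.prod : Mat)) a b := by
          refine mul_mono' 1 A t.prod t.prod one_nn ?_ hA (fun _ _ => le_rfl) a b
          intro a b
          exact le_trans (one_nn a b) (prod_ge_one t ht a b)

lemma prod_nn (L : List Mat) (h : ∀ A ∈ L, ∀ a b, 0 ≤ A a b) : ∀ a b, 0 ≤ L.prod a b := by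
  induction L with
  | nil => exact one_nn
  | cons A t ih =>
    intro a b
    rw [List.prod_cons, Matrix.mul_apply]
    exact Finset.sum_nonneg fun k _ =>
      mul_nonneg (h A (by simp) a k) (ih (fun B hB => h B (by simp [hB])) k b)

lemma prod_le_pow (L : List Mat) (B : Mat)
    (hBnn : ∀ a b, 0 ≤ B a b)
    (h : ∀ A ∈ L, (∀ a b, 0 ≤ A a b) ∧ (∀ a b, A a b ≤ B a b)) :
    ∀ a b, L.prod a b ≤ (B ^ L.length) a b := by
  induction L with
  | nil => intro a b; simp
  | cons A t ih =>
    have hA := h A (by simp)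
    have ht := ih (fun C hC => h C (by simp [hC]))
    have htnn : ∀ a b, 0 ≤ t.prod a b :=
      prod_nn t (fun C hC => (h C (by simp [hC])).1)
    intro a b
    rw [List.prod_cons, List.length_cons, pow_succ']
    exact mul_mono' A B t.prod (B ^ t.length) hA.1 htnn hA.2 ht a b

lemma pow_mono (A B : Mat) (hA : ∀ a b, 0 ≤ A a b) (hAB : ∀ a b, A a b ≤ B a b) (N : ℕ) :
    (∀ a b, 0 ≤ (A ^ N) a b) ∧ (∀ a b, (A ^ N) a b ≤ (B ^ N) a b) := by
  induction N with
  | zero => exact ⟨one_nn, fun a b => le_rfl⟩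
  | succ k ih =>
    constructor
    · intro a b
      rw [pow_succ, Matrix.mul_apply]
      exact Finset.sum_nonneg fun j _ => mul_nonneg (ih.1 a j) (hA j b)
    · intro a b
      rw [pow_succ, pow_succ]
      exact mul_mono' (A ^ k) (B ^ k) A B ih.1 hA ih.2 hAB a b

end Stmt7Aux

theorem stmt7 {n : ℕ} (Ω : Matrix (Fin n) (Fin n) ℝ) (hsymm : Ω.IsSymm)
    (hnn : ∀ a b, 0 ≤ Ω a b) (hdiag : ∀ i, Ω i i = 0)
    (l : List (Fin n)) (hall : ∀ i : Fin n, i ∈ l) :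
    (∃ N : ℕ, 0 < N ∧ ∀ a b,
        0 < ((((l.map (fun i => 1 + Matrix.single i i 1 * Ω)).prod : Matrix (Fin n) (Fin n) ℝ) ^ N)) a b) ↔
      (∃ N : ℕ, 0 < N ∧ ∀ a b, 0 < ((1 + Ω) ^ N) a b) := by
  rcases Nat.eq_zero_or_pos n with hn | hn
  · subst hn
    exact ⟨fun _ => ⟨1, one_pos, fun a => a.elim0⟩, fun _ => ⟨1, one_pos, fun a => a.elim0⟩⟩
  open Stmt7Aux in
  set Q : Fin n → Matrix (Fin n) (Fin n) ℝ :=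
    fun i => 1 + Matrix.single i i 1 * Ω with hQ
  set M : Matrix (Fin n) (Fin n) ℝ := (l.map Q).prod with hM
  -- entry of std basis product
  have hstd : ∀ (i : Fin n) a b,
      ((Matrix.single i i 1 * Ω : Matrix (Fin n) (Fin n) ℝ)) a b
        = if a = i then Ω i b else 0 := by
    intro i a b
    rw [Matrix.mul_apply]
    by_cases h : a = i
    · subst h; simp [Matrix.single]
    · simp only [Matrix.single, Matrix.of_apply, h, if_neg h]
      refine Finset.sum_eq_zero fun x _ => ?_
      rw [if_neg, zero_mul]
      rintro ⟨h1, -⟩; exact h h1.symm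
  have hQge1 : ∀ A ∈ l.map Q, ∀ a b, (1 : Matrix (Fin n) (Fin n) ℝ) a b ≤ A a b := by
    intro A hA a b
    rcases List.mem_map.mp hA with ⟨i, _, rfl⟩
    simp only [hQ, Matrix.add_apply, hstd]
    have : (0:ℝ) ≤ if a = i then Ω i b else 0 := by split <;> [exact hnn i b; exact le_rfl]
    linarith
  have hQle : ∀ A ∈ l.map Q, (∀ a b, 0 ≤ A a b) ∧ (∀ a b, A a b ≤ (1 + Ω) a b) := by
    intro A hA
    refine ⟨fun a b => le_trans (Stmt7Aux.one_nn a b) (hQge1 A hA a b), ?_⟩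
    rcases List.mem_map.mp hA with ⟨i, _, rfl⟩
    intro a b
    simp only [hQ, Matrix.add_apply, hstd]
    have h1 : (if a = i then Ω i b else 0) ≤ Ω a b := by
      split
      · next h => subst h; exact le_rfl
      · exact hnn a b
    linarith
  have hMnn : ∀ a b, 0 ≤ M a b := fun a b =>
    le_trans (Stmt7Aux.one_nn a b) (Stmt7Aux.prod_ge_one _ hQge1 a b)
  have hΩnn : ∀ a b, 0 ≤ (1 + Ω) a b := fun a b => by
    rw [Matrix.add_apply]
    exact add_nonneg (Stmt7Aux.one_nn a b) (hnn a b)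
  -- 1 + Ω ≤ M entrywise
  have hge : ∀ a b, (1 + Ω) a b ≤ M a b := by
    intro a b
    have hmem : Q a ∈ l.map Q := List.mem_map.mpr ⟨a, hall a, rfl⟩
    have := Stmt7Aux.prod_ge_mem (l.map Q) hQge1 (Q a) hmem a b
    calc (1 + Ω) a b = Q a a b := by
          simp only [hQ, Matrix.add_apply, hstd, if_pos rfl, if_true]
      _ ≤ M a b := this
  have hle : ∀ a b, M a b ≤ ((1 + Ω) ^ l.length) a b := by
    have h := Stmt7Aux.prod_le_pow (l.map Q) (1 + Ω) hΩnn hQle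
    simpa using h
  constructor
  · rintro ⟨N, hN, hpos⟩
    refine ⟨l.length * N, ?_, ?_⟩
    · have : l ≠ [] := fun h => by
        have := hall ⟨0, hn⟩; rw [h] at this; exact absurd this List.not_mem_nil
      exact Nat.mul_pos (List.length_pos_iff.mpr this) hN
    · intro a b
      rw [pow_mul]
      have := (Stmt7Aux.pow_mono M ((1 + Ω) ^ l.length) hMnn hle N).2 a b
      exact lt_of_lt_of_le (hpos a b) this
  · rintro ⟨N, hN, hpos⟩
    refine ⟨N, hN, fun a b => ?_⟩
    have := (Stmt7Aux.pow_mono (1 + Ω) M hΩnn hge N).2 a b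
    exact lt_of_lt_of_le (hpos a b) this
end

section
/- Let $\Omega$ be an $n\times n$ symmetric matrix over a commutative ring with zero diagonal, and let $C = \{v^T \Omega : v \in \mathbb{R}^n_{\ge 0}\}$ be the cone generated by the rows of $\Omega$ (for $\Omega$ with real nonnegative entries). Then $C M \subseteq C$ for every matrix $M$ in the monoid generated by $Q_i = I + D_i\Omega$, $1 \le i \le n$. -/
/-!
For `w = vᵀΩ` we have `w (1 + Dᵢ Ω) = w + wᵢ eᵢᵀ Ω = (v + wᵢ eᵢ)ᵀ Ω`, and `wᵢ ≥ 0` because `v` and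
`Ω` are nonnegative; so each generator maps the cone into itself. The matrices acting on the cone
in this way form a submonoid, which therefore contains the whole generated monoid.
-/

open Matrix

namespace Matrix

variable {m n R : Type*} [Fintype m] [DecidableEq m]

def rowCone [Semiring R] [PartialOrder R] (Ω : Matrix m n R) : Set (n → R) :=
  {w | ∃ v : m → R, (∀ k, 0 ≤ v k) ∧ w = v ᵥ* Ω}

def vecMulStabilizer [Semiring R] (S : Set (m → R)) : Submonoid (Matrix m m R) where
  carrier := {M | Set.MapsTo (· ᵥ* M) S S}
  one_mem' w hw := by simpa only [vecMul_one] using hw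
  mul_mem' hM hN w hw := by simpa only [← vecMul_vecMul] using hN (hM hw)

section Semiring

variable [Semiring R]

theorem vecMul_single_one_mul (w : m → R) (i : m) (Ω : Matrix m n R) :
    w ᵥ* (single i i (1 : R) * Ω) = Pi.single i (w i) ᵥ* Ω := by
  rw [← vecMul_vecMul]
  congr 1
  ext j
  by_cases h : i = j <;> simp [vecMul, dotProduct, single_apply, h, eq_comm]

theorem vecMul_vecMul_one_add_single_one_mul (v : m → R) (Ω : Matrix m m R) (i : m) :
    (v ᵥ* Ω) ᵥ* (1 + single i i (1 : R) * Ω) = (v + Pi.single i ((v ᵥ* Ω) i)) ᵥ* Ω := by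
  rw [vecMul_add, vecMul_one, vecMul_single_one_mul, add_vecMul]

variable [PartialOrder R] [IsOrderedRing R]

theorem mapsTo_rowCone_one_add_single_one_mul {Ω : Matrix m m R} (hΩ : ∀ a b, 0 ≤ Ω a b)
    (i : m) : Set.MapsTo (· ᵥ* (1 + single i i (1 : R) * Ω)) (rowCone Ω) (rowCone Ω) := by
  rintro _ ⟨v, hv, rfl⟩
  have hwi : 0 ≤ (v ᵥ* Ω) i := Finset.sum_nonneg fun j _ => mul_nonneg (hv j) (hΩ j i)
  exact ⟨v + Pi.single i ((v ᵥ* Ω) i),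
    fun k => add_nonneg (hv k) ((Pi.single_nonneg (α := fun _ : m => R)).2 hwi k),
    vecMul_vecMul_one_add_single_one_mul v Ω i⟩

end Semiring

end Matrix

theorem stmt10_general {n : ℕ} (Ω : Matrix (Fin n) (Fin n) ℝ)
    (hnn : ∀ a b, 0 ≤ Ω a b) :
    ∀ M ∈ Submonoid.closure
        (Set.range fun i : Fin n => 1 + Matrix.single i i 1 * Ω),
      ∀ w ∈ {w : Fin n → ℝ | ∃ v : Fin n → ℝ, (∀ k, 0 ≤ v k) ∧ w = Matrix.vecMul v Ω},
        Matrix.vecMul w M ∈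
          {w : Fin n → ℝ | ∃ v : Fin n → ℝ, (∀ k, 0 ≤ v k) ∧ w = Matrix.vecMul v Ω} := by
  have hclosure : Submonoid.closure (Set.range fun i : Fin n => 1 + single i i 1 * Ω) ≤
      vecMulStabilizer (rowCone Ω) :=
    Submonoid.closure_le.2 <| Set.range_subset_iff.2 (mapsTo_rowCone_one_add_single_one_mul hnn)
  exact fun M hM => hclosure hM

theorem stmt10 {n : ℕ} (Ω : Matrix (Fin n) (Fin n) ℝ) (hsymm : Ω.IsSymm)
    (hnn : ∀ a b, 0 ≤ Ω a b) (hdiag : ∀ i, Ω i i = 0) :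
    ∀ M ∈ Submonoid.closure
        (Set.range fun i : Fin n => 1 + Matrix.single i i 1 * Ω),
      ∀ w ∈ {w : Fin n → ℝ | ∃ v : Fin n → ℝ, (∀ k, 0 ≤ v k) ∧ w = Matrix.vecMul v Ω},
        Matrix.vecMul w M ∈
          {w : Fin n → ℝ | ∃ v : Fin n → ℝ, (∀ k, 0 ≤ v k) ∧ w = Matrix.vecMul v Ω} :=
  stmt10_general Ω hnn
end

section
/- Let $\Omega = \begin{pmatrix} 0 & X \\ X^T & 0 \end{pmatrix}$ be a real symmetric $n\times n$ block matrix with zero diagonal blocks, where $X$ is $a\times b$, and let $\Delta = \begin{pmatrix} 0 & X \\ -X^T & 0 \end{pmatrix}$. Then for every $i$, the matrix $Q_i = I + D_i\Omega$ satisfies $Q_i^T \Delta Q_i = \Delta$, i.e., the alternating form $\langle v, w\rangle_\Delta = v^T\Delta w$ is invariant under every matrix in the monoid generated by the $Q_i$. -/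
open Matrix

theorem stmt12 {a b : ℕ} (X : Matrix (Fin a) (Fin b) ℝ) :
    let Ω : Matrix (Fin a ⊕ Fin b) (Fin a ⊕ Fin b) ℝ := Matrix.fromBlocks 0 X Xᵀ 0
    let Δ : Matrix (Fin a ⊕ Fin b) (Fin a ⊕ Fin b) ℝ := Matrix.fromBlocks 0 X (-Xᵀ) 0
    let Q : Fin a ⊕ Fin b → Matrix (Fin a ⊕ Fin b) (Fin a ⊕ Fin b) ℝ :=
      fun i => 1 + Matrix.single i i 1 * Ω
    (∀ i, (Q i)ᵀ * Δ * Q i = Δ) ∧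
      (∀ M ∈ Submonoid.closure (Set.range Q), Mᵀ * Δ * M = Δ) := by
  intro Ω Δ Q
  set u : Fin a ⊕ Fin b → ℝ := Sum.elim (fun _ => 1) (fun _ => -1) with hu
  set U : Matrix (Fin a ⊕ Fin b) (Fin a ⊕ Fin b) ℝ := Matrix.diagonal u with hU
  have hUΩ : U * Ω = Δ := by
    ext j k
    rcases j with j | j <;> rcases k with k | k <;>
      simp [hU, hu, Ω, Δ, Matrix.diagonal_mul]
  have hΩU : Ω * U = -Δ := by
    ext j k
    rcases j with j | j <;> rcases k with k | k <;>
      simp [hU, hu, Ω, Δ, Matrix.mul_diagonal]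
  have hDU : ∀ i : Fin a ⊕ Fin b,
      Matrix.single i i (1:ℝ) * U = U * Matrix.single i i 1 := by
    intro i
    ext j k
    by_cases h : j = i ∧ k = i
    · obtain ⟨rfl, rfl⟩ := h; simp [Matrix.mul_diagonal, Matrix.diagonal_mul]
    · have hE : Matrix.single i i (1:ℝ) j k = 0 :=
        Matrix.single_apply_of_ne _ _ _ _ _
          (fun hc => h ⟨hc.1.symm, hc.2.symm⟩)
      rw [Matrix.mul_diagonal, Matrix.diagonal_mul, hE, zero_mul, mul_zero]
  have hΩii : ∀ i : Fin a ⊕ Fin b, Ω i i = 0 := by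
    intro i
    rcases i with i | i <;> simp [Ω]
  have hDΩD : ∀ i : Fin a ⊕ Fin b,
      Matrix.single i i (1:ℝ) * Ω * Matrix.single i i 1 = 0 := by
    intro i
    ext j k
    rcases eq_or_ne j i with rfl | hj
    · rcases eq_or_ne k j with rfl | hk
      · simp [hΩii]
      · simp [Matrix.mul_single_apply_of_ne, hk]
    · rw [Matrix.mul_assoc]
      simp [Matrix.single_mul_apply_of_ne _ _ _ _ _ hj]
  have hDT : ∀ i : Fin a ⊕ Fin b,
      (Matrix.single i i (1:ℝ))ᵀ = Matrix.single i i 1 := by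
    intro i
    ext j k
    simp [Matrix.single, Matrix.transpose_apply, and_comm]
  have hΩT : Ωᵀ = Ω := by
    simp [Ω, Matrix.fromBlocks_transpose]
  have part1 : ∀ i, (Q i)ᵀ * Δ * Q i = Δ := by
    intro i
    set D : Matrix (Fin a ⊕ Fin b) (Fin a ⊕ Fin b) ℝ := Matrix.single i i 1 with hD
    have hQ : Q i = 1 + D * Ω := rfl
    have hQT : (Q i)ᵀ = 1 + Ω * D := by
      rw [hQ, Matrix.transpose_add, Matrix.transpose_one, Matrix.transpose_mul, hΩT,
        hD, hDT]
    have hA : Ω * D * Δ = -(Δ * (D * Ω)) := by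
      calc Ω * D * Δ = Ω * D * (U * Ω) := by rw [hUΩ]
        _ = Ω * (D * U) * Ω := by noncomm_ring
        _ = Ω * (U * D) * Ω := by rw [hDU]
        _ = (Ω * U) * (D * Ω) := by noncomm_ring
        _ = -(Δ * (D * Ω)) := by rw [hΩU]; noncomm_ring
    have hB : Ω * D * Δ * (D * Ω) = 0 := by
      calc Ω * D * Δ * (D * Ω) = Ω * (D * U) * Ω * (D * Ω) := by rw [← hUΩ]; noncomm_ring
        _ = (Ω * U) * (D * Ω * D) * Ω := by rw [hDU]; noncomm_ring
        _ = 0 := by rw [hDΩD]; simp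
    have expand : (1 + Ω * D) * Δ * (1 + D * Ω)
        = Δ + (Ω * D * Δ + Δ * (D * Ω)) + Ω * D * Δ * (D * Ω) := by noncomm_ring
    rw [hQT, hQ, expand, hB, hA]
    simp
  refine ⟨part1, ?_⟩
  intro M hM
  induction hM using Submonoid.closure_induction with
  | mem x hx => obtain ⟨i, rfl⟩ := hx; exact part1 i
  | one => simp
  | mul x y hx hy ihx ihy =>
    calc (x * y)ᵀ * Δ * (x * y) = yᵀ * (xᵀ * Δ * x) * y := by
          rw [Matrix.transpose_mul]; noncomm_ring
      _ = Δ := by rw [ihx, ihy]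
end

section
/- Let $\Omega$ be a real symmetric $n\times n$ matrix with nonnegative entries and zero diagonal, $Q_i = I + D_i\Omega$, and $h(v) = \frac12 v^T \Omega v$. Then for every $v \in \mathbb{R}^n$ and every $i$, $h(Q_i v) - h(v) = \|Q_i v - v\|^2$, where $\|\cdot\|$ is the Euclidean norm. -/
/-!
With `c = (Ω v)ᵢ` we have `Qᵢ v = v + c eᵢ`. For symmetric `Ω` the quadratic form then grows by
`2 c (Ω v)ᵢ + c² Ωᵢᵢ = 2 c²`, and halving gives `c² = ‖c eᵢ‖²`.
-/

open Matrix

namespace Matrix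

variable {m R : Type*} [Fintype m]

theorem single_one_mul_mulVec [DecidableEq m] [Semiring R] (i : m) (A : Matrix m m R)
    (v : m → R) : (single i i 1 * A) *ᵥ v = Pi.single i ((A *ᵥ v) i) := by
  rw [← mulVec_mulVec, single_mulVec, one_mul]
  rfl

theorem IsSymm.dotProduct_mulVec_comm [CommSemiring R] {A : Matrix m m R} (hA : A.IsSymm)
    (x y : m → R) : x ⬝ᵥ A *ᵥ y = y ⬝ᵥ A *ᵥ x := by
  rw [dotProduct_mulVec, ← hA.eq, vecMul_transpose, dotProduct_comm, hA.eq]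

theorem IsSymm.dotProduct_mulVec_add_sub [CommRing R] {A : Matrix m m R} (hA : A.IsSymm)
    (v w : m → R) :
    (v + w) ⬝ᵥ A *ᵥ (v + w) - v ⬝ᵥ A *ᵥ v = 2 * (w ⬝ᵥ A *ᵥ v) + w ⬝ᵥ A *ᵥ w := by
  rw [mulVec_add, dotProduct_add, add_dotProduct, add_dotProduct, hA.dotProduct_mulVec_comm v w]
  ring

theorem single_dotProduct_mulVec_single [DecidableEq m] [NonUnitalNonAssocSemiring R]
    (A : Matrix m m R) (i : m) (c : R) :
    Pi.single i c ⬝ᵥ A *ᵥ Pi.single i c = c * (A i i * c) := by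
  simp [mulVec_single]

end Matrix

theorem stmt13_general {n : ℕ} (Ω : Matrix (Fin n) (Fin n) ℝ) (hsymm : Ω.IsSymm)
    (hdiag : ∀ i, Ω i i = 0)
    (i : Fin n) (v : Fin n → ℝ) :
    let Q := (1 : Matrix (Fin n) (Fin n) ℝ) + Matrix.single i i 1 * Ω
    (1 / 2) * (Q.mulVec v ⬝ᵥ Ω.mulVec (Q.mulVec v)) - (1 / 2) * (v ⬝ᵥ Ω.mulVec v)
      = (Q.mulVec v - v) ⬝ᵥ (Q.mulVec v - v) := by
  intro Q
  set c := (Ω *ᵥ v) i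
  have hstep : Q *ᵥ v - v = Pi.single i c := by
    rw [add_mulVec, one_mulVec, single_one_mul_mulVec, add_sub_cancel_left]
  have hQ : Q *ᵥ v = v + Pi.single i c := by
    rw [← hstep, add_sub_cancel]
  rw [hstep, hQ, ← mul_sub, hsymm.dotProduct_mulVec_add_sub, single_dotProduct_mulVec_single,
    hdiag, single_dotProduct, single_dotProduct, Pi.single_eq_same]
  ring

theorem stmt13 {n : ℕ} (Ω : Matrix (Fin n) (Fin n) ℝ) (hsymm : Ω.IsSymm)
    (hnn : ∀ a b, 0 ≤ Ω a b) (hdiag : ∀ i, Ω i i = 0)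
    (i : Fin n) (v : Fin n → ℝ) :
    let Q := (1 : Matrix (Fin n) (Fin n) ℝ) + Matrix.single i i 1 * Ω
    (1 / 2) * (Q.mulVec v ⬝ᵥ Ω.mulVec (Q.mulVec v)) - (1 / 2) * (v ⬝ᵥ Ω.mulVec v)
      = (Q.mulVec v - v) ⬝ᵥ (Q.mulVec v - v) :=
  stmt13_general Ω hsymm hdiag i v
end

section
/- Let $\Omega$ be a real symmetric $n\times n$ matrix with nonnegative entries and zero diagonal, and let $M$ be a product of the matrices $Q_i = I + D_i\Omega$ in which every index $1,\dots,n$ appears at least once. If $v \in \mathbb{R}^n$ satisfies $Mv - v \in \ker(\Omega)$, then $v \in \ker(\Omega)$. Consequently, $1$ is not an eigenvalue of the induced map of $M$ on $\mathbb{R}^n/\ker(\Omega)$. -/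
/-!
With `h(v) = vᵀΩv`, a factor `Q_i = 1 + E_ii Ω` adds `(Ωu)_i` to the `i`-th coordinate of `u`;
since `Ω` is symmetric with zero diagonal this raises `h` by exactly `2 (Ωu)_i ²`. So `h` never
decreases along the product `M`, and `h(Mv) = h(v)` forces every factor to act trivially, whence
`Mv = v` and `(Ωv)_i = 0` for every index `i` occurring in the product. Finally `Ω(Mv - v) = 0`
gives `h(Mv) = h(v)` by symmetry, and every index occurs.
-/

open Matrix

namespace Matrix

variable {ι R : Type*} [Fintype ι]

section CommRing

variable [CommRing R] {Ω : Matrix ι ι R}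

theorem IsSymm.dotProduct_mulVec_comm_s14 (hΩ : Ω.IsSymm) (u w : ι → R) :
    u ⬝ᵥ Ω *ᵥ w = w ⬝ᵥ Ω *ᵥ u := by
  conv_lhs => rw [← hΩ.eq]
  rw [dotProduct_mulVec, vecMul_transpose, dotProduct_comm]

theorem IsSymm.dotProduct_mulVec_self_eq_of_mulVec_eq (hΩ : Ω.IsSymm) {v w : ι → R}
    (h : Ω *ᵥ w = Ω *ᵥ v) : w ⬝ᵥ Ω *ᵥ w = v ⬝ᵥ Ω *ᵥ v := by
  calc w ⬝ᵥ Ω *ᵥ w = w ⬝ᵥ Ω *ᵥ v := by rw [h]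
    _ = v ⬝ᵥ Ω *ᵥ w := hΩ.dotProduct_mulVec_comm_s14 w v
    _ = v ⬝ᵥ Ω *ᵥ v := by rw [h]

variable [DecidableEq ι]

theorem one_add_single_mul_mulVec (Ω : Matrix ι ι R) (i : ι) (u : ι → R) :
    (1 + single i i 1 * Ω) *ᵥ u = u + Pi.single i ((Ω *ᵥ u) i) := by
  rw [add_mulVec, one_mulVec, ← mulVec_mulVec, single_mulVec_eq, one_mul,
    ← Pi.single_smul', smul_eq_mul, mul_one]

theorem IsSymm.dotProduct_mulVec_add_single (hΩ : Ω.IsSymm) (hdiag : ∀ i, Ω i i = 0)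
    (u : ι → R) (i : ι) (t : R) :
    (u + Pi.single i t) ⬝ᵥ Ω *ᵥ (u + Pi.single i t) = u ⬝ᵥ Ω *ᵥ u + 2 * t * (Ω *ᵥ u) i := by
  have hcross : u ⬝ᵥ Ω *ᵥ Pi.single i t = t * (Ω *ᵥ u) i := by
    rw [hΩ.dotProduct_mulVec_comm_s14, single_dotProduct]
  have hdiag' : Pi.single i t ⬝ᵥ Ω *ᵥ Pi.single i t = 0 := by
    simp [hdiag]
  rw [mulVec_add, dotProduct_add, add_dotProduct, add_dotProduct, hcross, single_dotProduct,
    hdiag']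
  ring

theorem IsSymm.dotProduct_mulVec_one_add_single_mul (hΩ : Ω.IsSymm) (hdiag : ∀ i, Ω i i = 0)
    (i : ι) (u : ι → R) :
    ((1 + single i i 1 * Ω) *ᵥ u) ⬝ᵥ Ω *ᵥ ((1 + single i i 1 * Ω) *ᵥ u) =
      u ⬝ᵥ Ω *ᵥ u + 2 * (Ω *ᵥ u) i ^ 2 := by
  rw [one_add_single_mul_mulVec, hΩ.dotProduct_mulVec_add_single hdiag]
  ring

variable (Ω) in
-- the product `M` of the factors `Q_i`, taken in the order `l`
def sweep (l : List ι) : Matrix ι ι R :=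
  (l.map fun i => 1 + single i i 1 * Ω).prod

theorem sweep_cons_mulVec (i : ι) (l : List ι) (v : ι → R) :
    sweep Ω (i :: l) *ᵥ v = (1 + single i i 1 * Ω) *ᵥ (sweep Ω l *ᵥ v) := by
  rw [sweep, List.map_cons, List.prod_cons, ← mulVec_mulVec, sweep]

end CommRing

section Ordered

variable [CommRing R] [LinearOrder R] [IsStrictOrderedRing R] [DecidableEq ι] {Ω : Matrix ι ι R}

theorem IsSymm.dotProduct_mulVec_self_le_sweep (hΩ : Ω.IsSymm) (hdiag : ∀ i, Ω i i = 0)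
    (l : List ι) (v : ι → R) :
    v ⬝ᵥ Ω *ᵥ v ≤ (sweep Ω l *ᵥ v) ⬝ᵥ Ω *ᵥ (sweep Ω l *ᵥ v) := by
  induction l with
  | nil => simp [sweep]
  | cons i l ih =>
    rw [sweep_cons_mulVec, hΩ.dotProduct_mulVec_one_add_single_mul hdiag]
    nlinarith [sq_nonneg ((Ω *ᵥ sweep Ω l *ᵥ v) i)]

theorem IsSymm.sweep_mulVec_eq_self_of_dotProduct_le (hΩ : Ω.IsSymm) (hdiag : ∀ i, Ω i i = 0)
    (l : List ι) (v : ι → R)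
    (hle : (sweep Ω l *ᵥ v) ⬝ᵥ Ω *ᵥ (sweep Ω l *ᵥ v) ≤ v ⬝ᵥ Ω *ᵥ v) :
    sweep Ω l *ᵥ v = v ∧ ∀ i ∈ l, (Ω *ᵥ v) i = 0 := by
  induction l with
  | nil => simp [sweep]
  | cons i l ih =>
    rw [sweep_cons_mulVec, hΩ.dotProduct_mulVec_one_add_single_mul hdiag] at hle
    rw [sweep_cons_mulVec, one_add_single_mul_mulVec]
    have hgrow := hΩ.dotProduct_mulVec_self_le_sweep hdiag l v
    set u := sweep Ω l *ᵥ v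
    have hstep : (Ω *ᵥ u) i = 0 := by nlinarith [sq_nonneg ((Ω *ᵥ u) i)]
    obtain ⟨hu, hl⟩ := ih (by linarith [sq_nonneg ((Ω *ᵥ u) i)])
    refine ⟨?_, ?_⟩
    · rw [hstep, Pi.single_zero, add_zero, hu]
    · rintro j (_ | ⟨_, hj⟩)
      · rwa [← hu]
      · exact hl j hj

end Ordered

end Matrix

theorem stmt14_general {n : ℕ} (Ω : Matrix (Fin n) (Fin n) ℝ) (hsymm : Ω.IsSymm)
    (hdiag : ∀ i, Ω i i = 0)
    (l : List (Fin n)) (hall : ∀ i : Fin n, i ∈ l) (v : Fin n → ℝ)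
    (h : Ω.mulVec
      (((l.map (fun i => 1 + Matrix.single i i 1 * Ω)).prod).mulVec v - v) = 0) :
    Ω.mulVec v = 0 := by
  change Ω *ᵥ (sweep Ω l *ᵥ v - v) = 0 at h
  have hΩ : Ω *ᵥ (sweep Ω l *ᵥ v) = Ω *ᵥ v := by rwa [mulVec_sub, sub_eq_zero] at h
  have hq := hsymm.dotProduct_mulVec_self_eq_of_mulVec_eq hΩ
  funext i
  exact (hsymm.sweep_mulVec_eq_self_of_dotProduct_le hdiag l v hq.le).2 i (hall i)

theorem stmt14 {n : ℕ} (Ω : Matrix (Fin n) (Fin n) ℝ) (hsymm : Ω.IsSymm)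
    (hnn : ∀ a b, 0 ≤ Ω a b) (hdiag : ∀ i, Ω i i = 0)
    (l : List (Fin n)) (hall : ∀ i : Fin n, i ∈ l) (v : Fin n → ℝ)
    (h : Ω.mulVec
      (((l.map (fun i => 1 + Matrix.single i i 1 * Ω)).prod).mulVec v - v) = 0) :
    Ω.mulVec v = 0 :=
  stmt14_general Ω hsymm hdiag l hall v h
end

section
/- Let $\Omega$ be a real symmetric $n\times n$ matrix with nonnegative entries and zero diagonal, with $\mathrm{rank}(\Omega) = r$, and let $M$ be a product of the matrices $Q_i = I + D_i\Omega$ using every index at least once. Then the characteristic polynomial of $M$ factors as $\chi_M(x) = (x-1)^{n-r} p(x)$, where $p$ is a monic polynomial of degree $r$ with $p(1) \ne 0$. -/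
open Matrix Polynomial

namespace Stmt15

variable {n : ℕ} (Ω : Matrix (Fin n) (Fin n) ℝ)

/-- energy -/
noncomputable def E (v : Fin n → ℝ) : ℝ := Ω.mulVec v ⬝ᵥ v

lemma symmdot (hsymm : Ω.IsSymm) (x y : Fin n → ℝ) :
    Ω.mulVec x ⬝ᵥ y = Ω.mulVec y ⬝ᵥ x := by
  calc Ω.mulVec x ⬝ᵥ y = y ⬝ᵥ Ω.mulVec x := dotProduct_comm _ _
    _ = Matrix.vecMul y Ω ⬝ᵥ x := dotProduct_mulVec _ _ _
    _ = Ωᵀ.mulVec y ⬝ᵥ x := by rw [mulVec_transpose]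
    _ = Ω.mulVec y ⬝ᵥ x := by rw [hsymm.eq]

lemma Q_mulVec (i : Fin n) (u : Fin n → ℝ) :
    (1 + Matrix.single i i 1 * Ω).mulVec u = u + Pi.single i (Ω.mulVec u i) := by
  rw [add_mulVec, one_mulVec, ← mulVec_mulVec]
  congr 1
  funext k
  simp [Matrix.mulVec, Matrix.single, dotProduct, Pi.single_apply, ite_and,
    Finset.sum_ite_eq, eq_comm]

lemma E_step (hsymm : Ω.IsSymm) (hdiag : ∀ i, Ω i i = 0) (u : Fin n → ℝ) (i : Fin n) (c : ℝ) :
    E Ω (u + Pi.single i c) = E Ω u + 2 * (Ω.mulVec u i * c) := by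
  have hs : Ω.mulVec (Pi.single i c) ⬝ᵥ u = Ω.mulVec u i * c := by
    rw [symmdot Ω hsymm, dotProduct_single]
  have hself : Ω.mulVec (Pi.single i c) ⬝ᵥ Pi.single i c = 0 := by
    rw [dotProduct_single]
    simp [mulVec_single, hdiag]
  simp only [E, mulVec_add, add_dotProduct, dotProduct_add, hs, hself, dotProduct_single]
  have h0 : (Ω.mulVec (Pi.single i c)) i = 0 := by simp [mulVec_single, hdiag]
  simp only [Pi.add_apply, h0, add_zero]
  ring

/-- the product action -/
noncomputable def P (l : List (Fin n)) (v : Fin n → ℝ) : Fin n → ℝ :=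
  ((l.map (fun i => 1 + Matrix.single i i 1 * Ω)).prod).mulVec v

lemma P_nil (v : Fin n → ℝ) : P Ω [] v = v := by simp [P]

lemma P_cons (i : Fin n) (t : List (Fin n)) (v : Fin n → ℝ) :
    P Ω (i :: t) v = P Ω t v + Pi.single i (Ω.mulVec (P Ω t v) i) := by
  rw [P, List.map_cons, List.prod_cons, ← mulVec_mulVec, ← P, Q_mulVec]

lemma main (hsymm : Ω.IsSymm) (hdiag : ∀ i, Ω i i = 0) (l : List (Fin n)) (v : Fin n → ℝ) :
    E Ω v ≤ E Ω (P Ω l v) ∧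
      (E Ω (P Ω l v) = E Ω v → P Ω l v = v ∧ ∀ i ∈ l, Ω.mulVec v i = 0) := by
  induction l with
  | nil => simp [P_nil]
  | cons i t ih =>
    set u := P Ω t v with hu
    set c := Ω.mulVec u i with hc
    have hE : E Ω (P Ω (i :: t) v) = E Ω u + 2 * (c * c) := by
      rw [P_cons, ← hu, E_step Ω hsymm hdiag, ← hc]
    constructor
    · rw [hE]
      nlinarith [ih.1, mul_self_nonneg c]
    · intro heq
      rw [hE] at heq
      have hc0 : c = 0 := by nlinarith [ih.1, mul_self_nonneg c]
      have huv : E Ω u = E Ω v := by nlinarith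
      obtain ⟨h1, h2⟩ := ih.2 huv
      have hPv : P Ω (i :: t) v = v := by
        rw [P_cons, ← hu, ← hc, hc0, h1]
        simp
      refine ⟨hPv, ?_⟩
      intro j hj
      rcases List.mem_cons.mp hj with h | h
      · subst h
        rw [← h1, ← hc, hc0]
      · exact h2 j h

lemma P_fix (l : List (Fin n)) (v : Fin n → ℝ) (hv : Ω.mulVec v = 0) : P Ω l v = v := by
  induction l with
  | nil => exact P_nil Ω v
  | cons i t ih =>
    rw [P_cons, ih, hv]
    simp

lemma ker_step (hsymm : Ω.IsSymm) (hdiag : ∀ i, Ω i i = 0) (l : List (Fin n))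
    (hall : ∀ i : Fin n, i ∈ l) (v : Fin n → ℝ)
    (h : Ω.mulVec (P Ω l v - v) = 0) : Ω.mulVec v = 0 := by
  have hz : Ω.mulVec (P Ω l v) = Ω.mulVec v := by
    rw [mulVec_sub, sub_eq_zero] at h
    exact h
  have h2 : Ω.mulVec v ⬝ᵥ (P Ω l v - v) = 0 := by
    rw [symmdot Ω hsymm, h, zero_dotProduct]
  have hEeq : E Ω (P Ω l v) = E Ω v := by
    have : E Ω (P Ω l v) = Ω.mulVec v ⬝ᵥ (v + (P Ω l v - v)) := by
      rw [E, hz, add_sub_cancel]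
    rw [this, dotProduct_add, h2, add_zero]
    rfl
  funext i
  exact ((main Ω hsymm hdiag l v).2 hEeq).2 i (hall i)

end Stmt15

theorem stmt15 {n : ℕ} (Ω : Matrix (Fin n) (Fin n) ℝ) (hsymm : Ω.IsSymm)
    (hnn : ∀ a b, 0 ≤ Ω a b) (hdiag : ∀ i, Ω i i = 0)
    (l : List (Fin n)) (hall : ∀ i : Fin n, i ∈ l) :
    ∃ p : Polynomial ℝ, p.Monic ∧ p.natDegree = Ω.rank ∧ p.eval 1 ≠ 0 ∧
      Matrix.charpoly ((l.map (fun i => 1 + Matrix.single i i 1 * Ω)).prod)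
        = (Polynomial.X - 1) ^ (n - Ω.rank) * p := by
  classical
  set M : Matrix (Fin n) (Fin n) ℝ :=
    (l.map (fun i => 1 + Matrix.single i i 1 * Ω)).prod with hM
  set f : (Fin n → ℝ) →ₗ[ℝ] (Fin n → ℝ) := Matrix.toLin' M with hf
  have hfapply : ∀ v, f v = M.mulVec v := fun v => Matrix.toLin'_apply M v
  set K : Submodule ℝ (Fin n → ℝ) := LinearMap.ker Ω.mulVecLin with hK
  have hmemK : ∀ v, v ∈ K ↔ Ω.mulVec v = 0 := by
    intro v
    rw [hK, LinearMap.mem_ker, Matrix.mulVecLin_apply]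
  have hPM : ∀ v, Stmt15.P Ω l v = M.mulVec v := fun v => rfl
  have hfix : ∀ v ∈ K, f v = v := by
    intro v hv
    rw [hfapply, ← hPM]
    exact Stmt15.P_fix Ω l v ((hmemK v).1 hv)
  have hker : ∀ v, f v - v ∈ K → v ∈ K := by
    intro v hv
    refine (hmemK v).2 (Stmt15.ker_step Ω hsymm hdiag l hall v ?_)
    have h0 := (hmemK _).1 hv
    rwa [hfapply, ← hPM] at h0
  obtain ⟨W, hW⟩ := Submodule.exists_isCompl K
  set d₁ := Module.finrank ℝ K with hd₁def
  set d₂ := Module.finrank ℝ W with hd₂def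
  let b₁ : Module.Basis (Fin d₁) ℝ K := Module.finBasis ℝ K
  let b₂ : Module.Basis (Fin d₂) ℝ W := Module.finBasis ℝ W
  let eqv := Submodule.prodEquivOfIsCompl K W hW
  let b : Module.Basis (Fin d₁ ⊕ Fin d₂) ℝ (Fin n → ℝ) := (b₁.prod b₂).map eqv
  have hbinlK : ∀ j, b (Sum.inl j) ∈ K := by
    intro j
    have h1 : b (Sum.inl j) = (b₁ j : Fin n → ℝ) := by
      show eqv ((b₁.prod b₂) (Sum.inl j)) = _
      have h2 : (b₁.prod b₂) (Sum.inl j) = (b₁ j, (0 : W)) :=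
        Prod.ext (Module.Basis.prod_apply_inl_fst b₁ b₂ j) (Module.Basis.prod_apply_inl_snd b₁ b₂ j)
      rw [h2, Submodule.coe_prodEquivOfIsCompl']
      simp
    rw [h1]
    exact (b₁ j).2
  set A := LinearMap.toMatrix b b f with hA
  have hcharA : M.charpoly = A.charpoly := by
    have h1 : (LinearMap.toMatrix (Pi.basisFun ℝ (Fin n)) (Pi.basisFun ℝ (Fin n)) f) = M := by
      rw [hf, LinearMap.toMatrix_eq_toMatrix']
      exact LinearMap.toMatrix'_toLin' M
    rw [← h1, LinearMap.charpoly_toMatrix, hA, LinearMap.charpoly_toMatrix]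
  have hcol : ∀ i j, A i (Sum.inl j) = if Sum.inl j = i then 1 else 0 := by
    intro i j
    rw [hA, LinearMap.toMatrix_apply, hfix _ (hbinlK j), Module.Basis.repr_self]
    exact Finsupp.single_apply
  have h11 : A.toBlocks₁₁ = 1 := by
    ext i j
    rw [Matrix.toBlocks₁₁, Matrix.of_apply, hcol, Matrix.one_apply]
    simp [eq_comm]
  have h21 : A.toBlocks₂₁ = 0 := by
    ext i j
    rw [Matrix.toBlocks₂₁, Matrix.of_apply, hcol]
    simp
  set D := A.toBlocks₂₂ with hD
  have hAblocks : A = Matrix.fromBlocks 1 A.toBlocks₁₂ 0 D := by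
    rw [hD, ← h11, ← h21, Matrix.fromBlocks_toBlocks]
  have hcharone : (1 : Matrix (Fin d₁) (Fin d₁) ℝ).charpoly = (X - 1) ^ d₁ := by
    rw [Matrix.charpoly]
    have hcm : Matrix.charmatrix (1 : Matrix (Fin d₁) (Fin d₁) ℝ)
        = Matrix.diagonal (fun _ => (X : Polynomial ℝ) - 1) := by
      ext i j
      by_cases h : i = j
      · subst h
        rw [Matrix.charmatrix_apply_eq, Matrix.diagonal_apply_eq]
        simp
      · rw [Matrix.charmatrix_apply_ne _ _ _ h, Matrix.diagonal_apply_ne _ h]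
        simp [Matrix.one_apply_ne h]
    rw [hcm, Matrix.det_diagonal, Finset.prod_const, Finset.card_univ, Fintype.card_fin]
  have hcharfact : A.charpoly = (X - 1) ^ d₁ * D.charpoly := by
    conv_lhs => rw [hAblocks]
    rw [Matrix.charpoly_fromBlocks_zero₂₁, hcharone]
  -- dimension bookkeeping
  have hrank1 : Ω.rank + d₁ = n := by
    have h1 := LinearMap.finrank_range_add_finrank_ker Ω.mulVecLin
    rw [Module.finrank_fin_fun] at h1
    rw [Matrix.rank, hd₁def, hK]
    exact h1
  have hsumd : d₁ + d₂ = n := by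
    have := Submodule.finrank_add_eq_of_isCompl hW
    rw [Module.finrank_fin_fun] at this
    exact this
  have hd2 : d₂ = Ω.rank := by omega
  have hd1 : d₁ = n - Ω.rank := by omega
  -- eval of charpoly of D at 1
  have heval : D.charpoly.eval 1 = (1 - D).det := by
    rw [Matrix.charpoly]
    have h1 : Polynomial.eval 1 (Matrix.charmatrix D).det
        = ((Matrix.charmatrix D).map (Polynomial.evalRingHom 1)).det := by
      rw [← RingHom.mapMatrix_apply, ← RingHom.map_det]
      rfl
    rw [h1]
    congr 1
    ext i j
    by_cases h : i = j
    · subst h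
      rw [Matrix.map_apply, Matrix.charmatrix_apply_eq]
      simp [Matrix.one_apply_eq]
    · rw [Matrix.map_apply, Matrix.charmatrix_apply_ne _ _ _ h]
      simp [Matrix.one_apply_ne h]
  have hpne : D.charpoly.eval 1 ≠ 0 := by
    rw [heval]
    intro h0
    obtain ⟨v, hvne, hv⟩ := Matrix.exists_mulVec_eq_zero_iff.mpr h0
    have hDv : D.mulVec v = v := by
      rw [Matrix.sub_mulVec, Matrix.one_mulVec, sub_eq_zero] at hv
      exact hv.symm
    set x := b.equivFun.symm ((Sum.elim (fun _ => (0 : ℝ)) v : Fin d₁ ⊕ Fin d₂ → ℝ)) with hx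
    have hrepr : ∀ i, b.repr x i = (Sum.elim (fun _ => (0 : ℝ)) v : Fin d₁ ⊕ Fin d₂ → ℝ) i := by
      intro i
      have h1 : b.equivFun x = (Sum.elim (fun _ => (0 : ℝ)) v : Fin d₁ ⊕ Fin d₂ → ℝ) := b.equivFun.apply_symm_apply _
      rw [← Module.Basis.equivFun_apply, h1]
    have hreprfun : (b.repr x : (Fin d₁ ⊕ Fin d₂) → ℝ) = (Sum.elim (fun _ => (0 : ℝ)) v : Fin d₁ ⊕ Fin d₂ → ℝ) := funext hrepr
    have hfxr : (b.repr (f x) : (Fin d₁ ⊕ Fin d₂) → ℝ) = A.mulVec ((Sum.elim (fun _ => (0 : ℝ)) v : Fin d₁ ⊕ Fin d₂ → ℝ)) := by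
      rw [← hreprfun, hA]
      exact (LinearMap.toMatrix_mulVec_repr b b f x).symm
    have hAm : ∀ j, (A.mulVec ((Sum.elim (fun _ => (0 : ℝ)) v : Fin d₁ ⊕ Fin d₂ → ℝ))) (Sum.inr j) = v j := by
      intro j
      rw [Matrix.mulVec, dotProduct, Fintype.sum_sum_type]
      have hz : ∀ k : Fin d₁, A (Sum.inr j) (Sum.inl k) * (Sum.elim (fun _ => (0 : ℝ)) v : Fin d₁ ⊕ Fin d₂ → ℝ) (Sum.inl k) = 0 := by
        intro k
        simp
      rw [Finset.sum_congr rfl (fun k _ => hz k), Finset.sum_const_zero, zero_add]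
      have h2 : ∀ k : Fin d₂, A (Sum.inr j) (Sum.inr k) * (Sum.elim (fun _ => (0 : ℝ)) v : Fin d₁ ⊕ Fin d₂ → ℝ) (Sum.inr k)
          = D j k * v k := by
        intro k
        rw [hD]
        rfl
      rw [Finset.sum_congr rfl (fun k _ => h2 k)]
      have h3 := congrFun hDv j
      rw [Matrix.mulVec, dotProduct] at h3
      exact h3
    have hKrepr : ∀ y : Fin n → ℝ, (∀ j, b.repr y (Sum.inr j) = 0) → y ∈ K := by
      intro y hy
      rw [← Module.Basis.sum_repr b y]
      refine Submodule.sum_mem K ?_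
      rintro (j | j) -
      · exact Submodule.smul_mem K _ (hbinlK j)
      · rw [hy j, zero_smul]
        exact Submodule.zero_mem K
    have hsub : f x - x ∈ K := by
      apply hKrepr
      intro j
      rw [map_sub, Finsupp.sub_apply]
      have e1 : b.repr (f x) (Sum.inr j) = v j := by
        rw [show b.repr (f x) (Sum.inr j) = (b.repr (f x) : (Fin d₁ ⊕ Fin d₂) → ℝ) (Sum.inr j) from rfl,
          hfxr, hAm]
      have e2 : b.repr x (Sum.inr j) = v j := by
        rw [hrepr]
        rfl
      rw [e1, e2, sub_self]
    have hxK : x ∈ K := hker x hsub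
    have hz2 : ∀ j, b.repr x (Sum.inr j) = 0 := by
      intro j
      have h1 : b.repr x = (b₁.prod b₂).repr (eqv.symm x) := rfl
      rw [h1, Module.Basis.prod_repr_inr]
      have h2 : (eqv.symm x).2 = 0 :=
        (Submodule.prodEquivOfIsCompl_symm_apply_snd_eq_zero K W hW).mpr hxK
      rw [h2, map_zero]
      rfl
    refine hvne (funext fun j => ?_)
    have := hz2 j
    rw [hrepr] at this
    exact this
  refine ⟨D.charpoly, D.charpoly_monic, ?_, hpne, ?_⟩
  · rw [Matrix.charpoly_natDegree_eq_dim, Fintype.card_fin, hd2]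
  · rw [hcharA, hcharfact, hd1]
end

section
/- Let $\Omega$ be a real symmetric $n\times n$ matrix with zero diagonal, and let $(i_1,i_2,i_3)$ be vertices with $\omega_{i_1 i_2} > 0$ and $\omega_{i_2 i_3} > 0$. Write $p_{i\gets j}$ for left multiplication by $Q_{i\gets j} = I - \omega_{ij}^{-1}T_{ji}\Omega$. Then the image of the composition $p_{i_3\gets i_2}\circ p_{i_2\gets i_1}$ equals $(e_{i_2}^T\Omega)^\perp \cap (e_{i_3}^T\Omega)^\perp$, a subspace of codimension 2; more generally, for any path $(i_1,\dots,i_m)$ in the support graph of $\Omega$ with $m \ge 3$, the image of $p_{i_m\gets i_{m-1}}\circ\cdots\circ p_{i_2\gets i_1}$ is $(e_{i_{m-1}}^T\Omega)^\perp \cap (e_{i_m}^T\Omega)^\perp$. -/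
/-!
Write `H i = (eᵢᵀΩ)^⊥`. The projection `p_{i←j}` maps everything into `H i`, moves only along `e_j`,
and fixes `H i` pointwise; since `Ω j j = 0` we have `e_j ∈ H j`, so it also preserves `H j`.
Inductively the image after the step into `j` is `H k ∩ H j` (`k` the vertex before `j`); the next
step `p_{i←j}` sends it into `H j ∩ H i`, and conversely `x ∈ H j ∩ H i` is the image of
`x + t e_j ∈ H k ∩ H j` for the `t` that kills the `k`-th coordinate of `Ω x`, which exists because
`Ω k j ≠ 0`. Codimension two holds because `(x ↦ ((Ω x)_a, (Ω x)_b))` is onto when `Ω a b ≠ 0`.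
-/

open Matrix

namespace Matrix

variable {ι K : Type*} [Fintype ι] [Field K]

/-- The hyperplane `(eᵢᵀΩ)^⊥`. -/
def rowPerp (Ω : Matrix ι ι K) (i : ι) : Submodule K (ι → K) :=
  LinearMap.ker ((LinearMap.proj i).comp Ω.mulVecLin)

section

variable (Ω : Matrix ι ι K)

theorem mem_rowPerp {i : ι} {x : ι → K} : x ∈ rowPerp Ω i ↔ (Ω *ᵥ x) i = 0 := Iff.rfl

theorem ker_mulVecLin_of_rows (a b : ι) :
    LinearMap.ker (of ![Ω a, Ω b]).mulVecLin = rowPerp Ω a ⊓ rowPerp Ω b := by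
  ext x
  rw [LinearMap.mem_ker, mulVecLin_apply, funext_iff, Fin.forall_fin_two]
  rfl

end

variable [DecidableEq ι]

/-- The paper's `Q_{i←j}`, the projection onto `(eᵢᵀΩ)^⊥` along `e_j`. -/
def rowProj (Ω : Matrix ι ι K) (i j : ι) : Matrix ι ι K :=
  1 - (Ω i j)⁻¹ • (single j i 1 * Ω)

section

variable (Ω : Matrix ι ι K)

theorem rowProj_mulVec (i j : ι) (x : ι → K) :
    rowProj Ω i j *ᵥ x = x - ((Ω i j)⁻¹ * (Ω *ᵥ x) i) • Pi.single j 1 := by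
  rw [rowProj, sub_mulVec, one_mulVec, smul_mulVec, ← mulVec_mulVec, single_mulVec]
  ext l
  rcases eq_or_ne l j with rfl | h
  · simp [mul_comm]
  · simp [h]

theorem mulVec_rowProj_mulVec_apply (i j l : ι) (x : ι → K) :
    (Ω *ᵥ (rowProj Ω i j *ᵥ x)) l = (Ω *ᵥ x) l - (Ω i j)⁻¹ * (Ω *ᵥ x) i * Ω l j := by
  simp [rowProj_mulVec, mulVec_sub, mulVec_smul]

theorem rowProj_mulVec_mem_rowPerp {i j : ι} (hij : Ω i j ≠ 0) (x : ι → K) :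
    rowProj Ω i j *ᵥ x ∈ rowPerp Ω i := by
  rw [mem_rowPerp, mulVec_rowProj_mulVec_apply]
  field_simp
  ring

theorem rowProj_mulVec_of_mem {i : ι} (j : ι) {x : ι → K} (hx : x ∈ rowPerp Ω i) :
    rowProj Ω i j *ᵥ x = x := by
  rw [rowProj_mulVec, (mem_rowPerp Ω).1 hx]
  simp

theorem rowProj_mulVec_mem_rowPerp_of_diag {i j : ι} (hjj : Ω j j = 0) {x : ι → K}
    (hx : x ∈ rowPerp Ω j) : rowProj Ω i j *ᵥ x ∈ rowPerp Ω j := by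
  rw [mem_rowPerp, mulVec_rowProj_mulVec_apply, hjj, (mem_rowPerp Ω).1 hx]
  ring

theorem range_rowProj {i j : ι} (hij : Ω i j ≠ 0) :
    LinearMap.range (rowProj Ω i j).mulVecLin = rowPerp Ω i := by
  refine le_antisymm ?_ fun x hx => ⟨x, rowProj_mulVec_of_mem Ω j hx⟩
  rintro _ ⟨x, rfl⟩
  exact rowProj_mulVec_mem_rowPerp Ω hij x

theorem range_rowProj_mul {i j k : ι} (hij : Ω i j ≠ 0) (hkj : Ω k j ≠ 0) (hjj : Ω j j = 0)
    {A : Matrix ι ι K} (hlow : rowPerp Ω k ⊓ rowPerp Ω j ≤ LinearMap.range A.mulVecLin)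
    (hup : LinearMap.range A.mulVecLin ≤ rowPerp Ω j) :
    LinearMap.range (rowProj Ω i j * A).mulVecLin = rowPerp Ω j ⊓ rowPerp Ω i := by
  rw [mulVecLin_mul, LinearMap.range_comp]
  apply le_antisymm
  · rintro _ ⟨y, hy, rfl⟩
    exact ⟨rowProj_mulVec_mem_rowPerp_of_diag Ω hjj (hup hy), rowProj_mulVec_mem_rowPerp Ω hij y⟩
  · rintro x ⟨hxj, hxi⟩
    rw [SetLike.mem_coe, mem_rowPerp] at hxj hxi
    obtain ⟨t, ht⟩ : ∃ t, (Ω *ᵥ x) k + t * Ω k j = 0 :=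
      ⟨-(Ω k j)⁻¹ * (Ω *ᵥ x) k, by field_simp; ring⟩
    have hΩy (l : ι) : (Ω *ᵥ (x + t • Pi.single j 1)) l = (Ω *ᵥ x) l + t * Ω l j := by
      simp [mulVec_add, mulVec_smul]
    have hy : x + t • Pi.single j 1 ∈ rowPerp Ω k ⊓ rowPerp Ω j := by
      refine ⟨(mem_rowPerp Ω).2 ?_, (mem_rowPerp Ω).2 ?_⟩
      · rw [hΩy, ht]
      · rw [hΩy, hxj, hjj, mul_zero, add_zero]
    refine ⟨_, hlow hy, ?_⟩
    have hcoef : (Ω i j)⁻¹ * (Ω *ᵥ (x + t • Pi.single j 1)) i = t := by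
      rw [hΩy, hxi, zero_add]
      field_simp
    rw [mulVecLin_apply, rowProj_mulVec, hcoef, add_sub_cancel_right]

theorem surjective_mulVecLin_of_rows {a b : ι} (hab : Ω a b ≠ 0) (hba : Ω b a ≠ 0)
    (haa : Ω a a = 0) (hbb : Ω b b = 0) :
    Function.Surjective (of ![Ω a, Ω b]).mulVecLin := by
  intro v
  refine ⟨((Ω b a)⁻¹ * v 1) • Pi.single a 1 + ((Ω a b)⁻¹ * v 0) • Pi.single b 1, ?_⟩
  ext r
  fin_cases r <;> simp [mulVec_add, mulVec_smul, haa, hbb] <;> field_simp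

theorem finrank_ker_mulVecLin_of_rows {a b : ι} (hab : Ω a b ≠ 0) (hba : Ω b a ≠ 0)
    (haa : Ω a a = 0) (hbb : Ω b b = 0) :
    Module.finrank K (LinearMap.ker (of ![Ω a, Ω b]).mulVecLin) = Fintype.card ι - 2 := by
  have h := LinearMap.finrank_range_add_finrank_ker (of ![Ω a, Ω b]).mulVecLin
  rw [LinearMap.range_eq_top.2 (surjective_mulVecLin_of_rows Ω hab hba haa hbb), finrank_top,
    Module.finrank_fintype_fun_eq_card, Module.finrank_fintype_fun_eq_card, Fintype.card_fin] at h
  omega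

end

/-- `p_{γ k ← γ (k-1)} ∘ ⋯ ∘ p_{γ 1 ← γ 0}`. -/
def pathProd (Ω : Matrix ι ι K) (γ : ℕ → ι) (k : ℕ) : Matrix ι ι K :=
  ((List.range k).map fun l => rowProj Ω (γ (l + 1)) (γ l)).reverse.prod

theorem pathProd_succ (Ω : Matrix ι ι K) (γ : ℕ → ι) (k : ℕ) :
    pathProd Ω γ (k + 1) = rowProj Ω (γ (k + 1)) (γ k) * pathProd Ω γ k := by
  simp [pathProd, List.range_succ]

theorem range_pathProd {Ω : Matrix ι ι K} (hsymm : Ω.IsSymm) (hdiag : ∀ l, Ω l l = 0)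
    {m : ℕ} {γ : ℕ → ι} (hpath : ∀ l, l + 1 < m → Ω (γ l) (γ (l + 1)) ≠ 0) :
    ∀ k, k + 2 < m → LinearMap.range (pathProd Ω γ (k + 2)).mulVecLin
      = rowPerp Ω (γ (k + 1)) ⊓ rowPerp Ω (γ (k + 2)) := by
  have hback (l : ℕ) (hl : l + 1 < m) : Ω (γ (l + 1)) (γ l) ≠ 0 := by
    rw [← hsymm.apply]
    exact hpath l hl
  intro k hk
  induction k with
  | zero =>
    have hfirst : LinearMap.range (pathProd Ω γ 1).mulVecLin = rowPerp Ω (γ 1) := by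
      rw [pathProd_succ, pathProd, List.range_zero, List.map_nil, List.reverse_nil,
        List.prod_nil, mul_one, range_rowProj Ω (hback 0 (by omega))]
    rw [pathProd_succ]
    exact range_rowProj_mul Ω (hback 1 hk) (hpath 0 (by omega)) (hdiag _)
      (hfirst ▸ inf_le_right) hfirst.le
  | succ k ih =>
    have ih := ih (by omega)
    rw [pathProd_succ]
    exact range_rowProj_mul Ω (hback (k + 2) hk) (hpath (k + 1) (by omega)) (hdiag _)
      ih.ge (ih ▸ inf_le_right)

end Matrix

theorem stmt18 {n : ℕ} (Ω : Matrix (Fin n) (Fin n) ℝ) (hsymm : Ω.IsSymm)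
    (hdiag : ∀ k, Ω k k = 0) (m : ℕ) (hm : 3 ≤ m) (γ : ℕ → Fin n)
    (hpath : ∀ k, k + 1 < m → 0 < Ω (γ k) (γ (k + 1))) :
    let Q : Fin n → Fin n → Matrix (Fin n) (Fin n) ℝ := fun a b =>
      1 - (Ω a b)⁻¹ • (Matrix.single b a 1 * Ω)
    let P := ((List.range (m - 1)).map (fun k => Q (γ (k + 1)) (γ k))).reverse.prod
    LinearMap.range P.mulVecLin
        = LinearMap.ker (Matrix.of ![Ω (γ (m - 2)), Ω (γ (m - 1))]).mulVecLin ∧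
      Module.finrank ℝ (LinearMap.range P.mulVecLin) = n - 2 := by
  intro Q P
  obtain ⟨k, rfl⟩ : ∃ k, m = k + 3 := ⟨m - 3, by omega⟩
  have hpath' (l : ℕ) (hl : l + 1 < k + 3) : Ω (γ l) (γ (l + 1)) ≠ 0 := (hpath l hl).ne'
  have hrange : LinearMap.range P.mulVecLin
      = LinearMap.ker (of ![Ω (γ (k + 1)), Ω (γ (k + 2))]).mulVecLin := by
    rw [ker_mulVecLin_of_rows]
    exact range_pathProd hsymm hdiag hpath' k (by omega)
  refine ⟨hrange, ?_⟩
  have hlast := hpath' (k + 1) (by omega)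
  rw [hrange, finrank_ker_mulVecLin_of_rows Ω hlast (by rwa [← hsymm.apply]) (hdiag _) (hdiag _),
    Fintype.card_fin]
end

section
/- Let $\Omega$ be a real symmetric $n\times n$ matrix with zero diagonal, and suppose $\omega_{i_1 i_2}, \omega_{i_2 i}, \omega_{i_2 i_3} > 0$. Writing $p_{a\gets b}$ for the projection given by left multiplication by $Q_{a\gets b} = I - \omega_{ab}^{-1}T_{ba}\Omega$, one has the backtracking-removal identity $p_{i_3\gets i_2}\circ p_{i_2\gets i}\circ p_{i\gets i_2}\circ p_{i_2\gets i_1} = p_{i_3\gets i_2}\circ p_{i_2\gets i_1}$. -/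
open Matrix

lemma keyP {n : ℕ} (Ω : Matrix (Fin n) (Fin n) ℝ) (a b a' b' : Fin n) :
    (single b a 1 * Ω) * (single b' a' 1 * Ω)
      = Ω a b' • (single b a' 1 * Ω) := by
  ext x y
  simp [Matrix.mul_apply, Matrix.single, Finset.sum_ite_eq, ite_and,
    Finset.mul_sum, Finset.sum_ite_eq']


theorem stmt19 {n : ℕ} (Ω : Matrix (Fin n) (Fin n) ℝ) (hsymm : Ω.IsSymm)
    (hdiag : ∀ k, Ω k k = 0) (i₁ i₂ i i₃ : Fin n)
    (h12 : 0 < Ω i₁ i₂) (h2i : 0 < Ω i₂ i) (h23 : 0 < Ω i₂ i₃) :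
    let Q : Fin n → Fin n → Matrix (Fin n) (Fin n) ℝ := fun a b =>
      1 - (Ω a b)⁻¹ • (Matrix.single b a 1 * Ω)
    Q i₃ i₂ * Q i₂ i * Q i i₂ * Q i₂ i₁ = Q i₃ i₂ * Q i₂ i₁ := by
  intro Q
  have hs : ∀ a b : Fin n, Ω a b = Ω b a := fun a b => by
    conv_lhs => rw [← hsymm]
    rfl
  have h21 : Ω i₂ i₁ ≠ 0 := by rw [hs]; exact h12.ne'
  have hi2 : Ω i i₂ ≠ 0 := by rw [hs]; exact h2i.ne'
  have h32 : Ω i₃ i₂ ≠ 0 := by rw [hs]; exact h23.ne'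
  simp only [Q, sub_mul, mul_sub, one_mul, mul_one, smul_mul_assoc, mul_smul_comm,
    keyP, smul_smul, smul_sub, hdiag, mul_zero, zero_mul, zero_smul, smul_zero,
    sub_zero, zero_sub, mul_comm]
  match_scalars <;> (field_simp; try ring)
end
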